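/- arXiv:math/0601754 — 2 statements merged into one kernel-verified Lean document; each statement's English description precedes it below -/
import Mathlib

section
/- Let D₀ be a positive line of (ℂ³,h). Then h is negative definite on the plane D₀^⊥, and the map D ↦ (D, D ⊔ D₀) is a bijection from the set of lines contained in D₀^⊥ onto the set of flags (D,P) such that D is a negative line, P has signature (1,1), and D^⊥ ∩ P = D₀. (The twistor fiber π^{-1}(D₀) is a projective line.) -/
open Complex ComplexConjugate Module

/-- The Hermitian form of signature (1,2) on ℂ³. -/
noncomputable def h (z w : Fin 3 → ℂ) : ℂ :=
  z 0 * conj (w 0) - z 1 * conj (w 1) - z 2 * conj (w 2)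

/-- The orthogonal of a subspace with respect to `h`. -/
noncomputable def perp (V : Submodule ℂ (Fin 3 → ℂ)) : Submodule ℂ (Fin 3 → ℂ) where
  carrier := {z | ∀ v ∈ V, h z v = 0}
  add_mem' := by
    intro a b ha hb v hv
    have ha' := ha v hv
    have hb' := hb v hv
    simp only [h, Pi.add_apply] at ha' hb' ⊢
    linear_combination ha' + hb'
  zero_mem' := by
    intro v hv
    simp [h]
  smul_mem' := by
    intro c x hx v hv
    have hx' := hx v hv
    simp only [h, Pi.smul_apply, smul_eq_mul] at hx' ⊢
    linear_combination c * hx'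

/-- `P` has signature (1,1): it has a basis `(e₁, e₂)` with
`h e₁ e₁ = 1`, `h e₂ e₂ = -1`, `h e₁ e₂ = 0`. -/
def IsSig11 (P : Submodule ℂ (Fin 3 → ℂ)) : Prop :=
  ∃ e₁ e₂ : Fin 3 → ℂ, e₁ ∈ P ∧ e₂ ∈ P ∧
    LinearIndependent ℂ ![e₁, e₂] ∧ Submodule.span ℂ {e₁, e₂} = P ∧
    h e₁ e₁ = 1 ∧ h e₂ e₂ = -1 ∧ h e₁ e₂ = 0

/-!
Write `D₀ = ℂ e₀` with `e₀ = (a, b, c)` and `h e₀ e₀ = 1`. If `z = (x, y, w)` satisfies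
`h z e₀ = 0` then `x ā = y b̄ + w c̄`, so Cauchy–Schwarz in `ℂ²` together with
`|b|² + |c|² < |a|²` gives `|x|² < |y|² + |w|²` unless `z = 0`: `h` is negative definite on the
plane `D₀^⊥ = ker h(·, e₀)`. For a line `D = ℂ e ⊆ D₀^⊥` normalised by `h e e = -1`, the pair
`(e₀, e)` is an `h`-orthogonal basis of `D ⊔ D₀` of signature (1,1), and `D^⊥ ∩ (D ⊔ D₀) = D₀`
by reading off the `e`-coordinate. Conversely a flag `(D, P)` with `D^⊥ ∩ P = D₀` has
`D₀ ⊆ D^⊥`, i.e. `D ⊆ D₀^⊥`, and `P = D ⊔ D₀` since both are planes.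
-/

open Submodule

lemma h_swap (z w : Fin 3 → ℂ) : h w z = conj (h z w) := by
  simp only [h, map_sub, map_mul, conj_conj]; ring

lemma h_add_left (z z' w : Fin 3 → ℂ) : h (z + z') w = h z w + h z' w := by
  simp only [h, Pi.add_apply]; ring

lemma h_smul_left (c : ℂ) (z w : Fin 3 → ℂ) : h (c • z) w = c * h z w := by
  simp only [h, Pi.smul_apply, smul_eq_mul]; ring

lemma h_smul_right (c : ℂ) (z w : Fin 3 → ℂ) : h z (c • w) = conj c * h z w := by
  simp only [h, Pi.smul_apply, smul_eq_mul, map_mul]; ring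

lemma h_self (z : Fin 3 → ℂ) :
    h z z = ((normSq (z 0) - normSq (z 1) - normSq (z 2) : ℝ) : ℂ) := by
  simp only [h, mul_conj, ofReal_sub]

lemma ofReal_re_h_self (z : Fin 3 → ℂ) : ((h z z).re : ℂ) = h z z := by
  rw [h_self, ofReal_re]

noncomputable def hLeft (e : Fin 3 → ℂ) : (Fin 3 → ℂ) →ₗ[ℂ] ℂ where
  toFun z := h z e
  map_add' z z' := h_add_left z z' e
  map_smul' c z := h_smul_left c z e

lemma mem_perp_span_singleton {e z : Fin 3 → ℂ} :
    z ∈ perp (ℂ ∙ e) ↔ h z e = 0 := by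
  refine ⟨fun hz => hz e (mem_span_singleton_self e), fun hz v hv => ?_⟩
  obtain ⟨c, rfl⟩ := mem_span_singleton.mp hv
  rw [h_smul_right, hz, mul_zero]

lemma perp_span_singleton (e : Fin 3 → ℂ) : perp (ℂ ∙ e) = LinearMap.ker (hLeft e) := by
  ext z
  exact mem_perp_span_singleton

lemma le_perp_comm {V W : Submodule ℂ (Fin 3 → ℂ)} : V ≤ perp W ↔ W ≤ perp V :=
  ⟨fun hVW w hw v hv => by rw [h_swap, hVW hv w hw, map_zero],
    fun hWV v hv w hw => by rw [h_swap, hWV hw v hv, map_zero]⟩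

lemma finrank_perp_span_singleton {e : Fin 3 → ℂ} (he : h e e ≠ 0) :
    finrank ℂ (perp (ℂ ∙ e)) = 2 := by
  have hsurj : LinearMap.range (hLeft e) = ⊤ :=
    LinearMap.range_eq_top.mpr fun c => ⟨(c / h e e) • e, by
      change h _ e = c
      rw [h_smul_left, div_mul_cancel₀ _ he]⟩
  have := LinearMap.finrank_range_add_finrank_ker (hLeft e)
  rw [hsurj, finrank_top, ← perp_span_singleton] at this
  simp only [finrank_self, Module.finrank_fin_fun] at this
  omega

lemma normSq_mul_conj_add_mul_conj_le (y w b c : ℂ) :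
    normSq (y * conj b + w * conj c) ≤ (normSq y + normSq w) * (normSq b + normSq c) := by
  have lagrange : normSq (y * conj b + w * conj c) + normSq (y * c - w * b)
      = (normSq y + normSq w) * (normSq b + normSq c) := by
    simp only [normSq_apply, add_re, add_im, sub_re, sub_im, mul_re, mul_im, conj_re, conj_im]
    ring
  linarith [normSq_nonneg (y * c - w * b)]

lemma re_h_self_neg_of_h_eq_zero {e z : Fin 3 → ℂ} (he : 0 < (h e e).re) (hz : h z e = 0)
    (hz0 : z ≠ 0) : (h z z).re < 0 := by
  have he' : normSq (e 1) + normSq (e 2) < normSq (e 0) := by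
    rw [h_self, ofReal_re] at he
    linarith
  have hx : z 0 * conj (e 0) = z 1 * conj (e 1) + z 2 * conj (e 2) := by
    simp only [h] at hz
    linear_combination hz
  have hcs := normSq_mul_conj_add_mul_conj_le (z 1) (z 2) (e 1) (e 2)
  rw [← hx, normSq_mul, normSq_conj] at hcs
  rw [h_self, ofReal_re]
  by_cases hyw : z 1 = 0 ∧ z 2 = 0
  · have he0 : e 0 ≠ 0 := fun h0 => by
      rw [h0, map_zero] at he'
      linarith [normSq_nonneg (e 1), normSq_nonneg (e 2)]
    have hx0 : z 0 = 0 := by simpa [hyw, he0] using hx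
    exact absurd (funext fun i => by fin_cases i <;> simp [hx0, hyw]) hz0
  · have hpos : 0 < normSq (z 1) + normSq (z 2) := by
      rcases not_and_or.mp hyw with h0 | h0
      · linarith [normSq_pos.mpr h0, normSq_nonneg (z 2)]
      · linarith [normSq_pos.mpr h0, normSq_nonneg (z 1)]
    have := hcs.trans_lt (mul_lt_mul_of_pos_left he' hpos)
    linarith [lt_of_mul_lt_mul_right this (normSq_nonneg (e 0))]

lemma exists_eq_span_singleton_h_self_eq {L : Submodule ℂ (Fin 3 → ℂ)} (hL : finrank ℂ L = 1)
    {t : ℝ} (ht : ∀ v ∈ L, v ≠ 0 → 0 < (h v v).re * t) :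
    ∃ e, L = ℂ ∙ e ∧ h e e = t := by
  obtain ⟨v, hv, hv0⟩ := exists_mem_ne_zero_of_ne_bot (show L ≠ ⊥ by rintro rfl; simp at hL)
  set r := (h v v).re
  have hrt : 0 < r * t := ht v hv hv0
  have hr0 : r ≠ 0 := by rintro h0; simp [h0] at hrt
  have hq : 0 < t / r := by
    rcases hr0.lt_or_gt with hr | hr
    · exact div_pos_of_neg_of_neg (by nlinarith) hr
    · exact div_pos (by nlinarith) hr
  set c : ℂ := (Real.sqrt (t / r) : ℂ)
  have hc : normSq c = t / r := by rw [normSq_ofReal, Real.mul_self_sqrt hq.le]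
  have hc0 : c ≠ 0 := fun h0 => by simp [h0] at hc; linarith
  refine ⟨c • v, ?_, ?_⟩
  · rw [span_singleton_smul_eq hc0.isUnit, eq_span_singleton_of_mem_of_finrank_eq_one hL hv hv0]
  · rw [h_smul_left, h_smul_right, ← mul_assoc, mul_conj, hc, ← ofReal_re_h_self v, ← ofReal_mul,
      div_mul_cancel₀ _ hr0]

lemma h_zero_left (w : Fin 3 → ℂ) : h 0 w = 0 := by
  simp [h]

lemma h_linear_combination_left (s t : ℂ) (e₁ e₂ w : Fin 3 → ℂ) :
    h (s • e₁ + t • e₂) w = s * h e₁ w + t * h e₂ w := by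
  rw [h_add_left, h_smul_left, h_smul_left]

lemma isSig11_span_pair {e₁ e₂ : Fin 3 → ℂ} (h₁ : h e₁ e₁ = 1) (h₂ : h e₂ e₂ = -1)
    (h₁₂ : h e₁ e₂ = 0) : IsSig11 (span ℂ {e₁, e₂}) := by
  have h₂₁ : h e₂ e₁ = 0 := by rw [h_swap, h₁₂, map_zero]
  refine ⟨e₁, e₂, subset_span (by simp), subset_span (by simp), ?_, rfl, h₁, h₂, h₁₂⟩
  refine LinearIndependent.pair_iff.mpr fun s t hst => ⟨?_, ?_⟩
  · simpa [h_linear_combination_left, h_zero_left, h₁, h₂₁] using congrArg (h · e₁) hst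
  · simpa [h_linear_combination_left, h_zero_left, h₂, h₁₂] using congrArg (h · e₂) hst

lemma perp_span_singleton_inf_span_pair {e₁ e₂ : Fin 3 → ℂ} (h₂ : h e₂ e₂ ≠ 0)
    (h₁₂ : h e₁ e₂ = 0) : perp (ℂ ∙ e₂) ⊓ span ℂ {e₁, e₂} = ℂ ∙ e₁ := by
  refine le_antisymm ?_ (le_inf ?_ (span_mono (by simp)))
  · rintro p ⟨hp₂, hp⟩
    obtain ⟨a, b, rfl⟩ := mem_span_pair.mp hp
    have hb : b = 0 := by
      simpa [mem_perp_span_singleton, h_linear_combination_left, h₁₂, h₂] using hp₂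
    simpa [hb] using smul_mem _ a (mem_span_singleton_self e₁)
  · exact (span_singleton_le_iff_mem _ _).mpr (mem_perp_span_singleton.mpr h₁₂)

lemma inf_eq_bot_of_neg_of_pos {V W : Submodule ℂ (Fin 3 → ℂ)}
    (hV : ∀ v ∈ V, v ≠ 0 → (h v v).re < 0) (hW : ∀ w ∈ W, w ≠ 0 → 0 < (h w w).re) :
    V ⊓ W = ⊥ :=
  (Submodule.eq_bot_iff _).mpr fun v ⟨hvV, hvW⟩ => by
    by_contra hv0
    exact (hV v hvV hv0).not_gt (hW v hvW hv0)

lemma finrank_sup_eq_two {V W : Submodule ℂ (Fin 3 → ℂ)} (hV : finrank ℂ V = 1)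
    (hW : finrank ℂ W = 1) (hVW : V ⊓ W = ⊥) : finrank ℂ ↥(V ⊔ W) = 2 := by
  have := finrank_sup_add_finrank_inf_eq V W
  rw [hVW, finrank_bot] at this
  omega

/-- for a positive line `D₀`, `h` is negative definite on the plane `D₀^⊥`,
and `D ↦ (D, D ⊔ D₀)` is a bijection from the lines of `D₀^⊥` onto the flags `(D, P)`
with `D` a negative line, `P` of signature (1,1) and `D^⊥ ∩ P = D₀`. -/
theorem twistor_fiber_is_projective_line
    (D₀ : Submodule ℂ (Fin 3 → ℂ))
    (hD₀1 : finrank ℂ D₀ = 1)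
    (hD₀pos : ∀ v ∈ D₀, v ≠ 0 → 0 < (h v v).re) :
    (finrank ℂ ↥(perp D₀) = 2 ∧ ∀ v ∈ perp D₀, v ≠ 0 → (h v v).re < 0) ∧
    Set.BijOn (fun D => (D, D ⊔ D₀))
      {D : Submodule ℂ (Fin 3 → ℂ) | finrank ℂ D = 1 ∧ D ≤ perp D₀}
      {DP : Submodule ℂ (Fin 3 → ℂ) × Submodule ℂ (Fin 3 → ℂ) |
        (finrank ℂ DP.1 = 1 ∧ ∀ v ∈ DP.1, v ≠ 0 → (h v v).re < 0) ∧
        (finrank ℂ DP.2 = 2 ∧ IsSig11 DP.2) ∧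
        DP.1 ≤ DP.2 ∧ perp DP.1 ⊓ DP.2 = D₀} := by
  obtain ⟨e₀, rfl, he₀⟩ := exists_eq_span_singleton_h_self_eq hD₀1 (t := 1) (by simpa using hD₀pos)
  have hneg : ∀ v ∈ perp (ℂ ∙ e₀), v ≠ 0 → (h v v).re < 0 := fun v hv =>
    re_h_self_neg_of_h_eq_zero (by simp [he₀]) (mem_perp_span_singleton.mp hv)
  have hsup (D : Submodule ℂ (Fin 3 → ℂ)) (hD1 : finrank ℂ D = 1)
      (hDneg : ∀ v ∈ D, v ≠ 0 → (h v v).re < 0) : finrank ℂ ↥(D ⊔ ℂ ∙ e₀) = 2 :=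
    finrank_sup_eq_two hD1 hD₀1 (inf_eq_bot_of_neg_of_pos hDneg hD₀pos)
  refine ⟨⟨finrank_perp_span_singleton (by simp [he₀]), hneg⟩, ?_,
    fun _ _ _ _ hDD => congrArg Prod.fst hDD, ?_⟩
  · rintro D ⟨hD1, hDle⟩
    have hDneg v hv := hneg v (hDle hv)
    obtain ⟨e, rfl, he⟩ := exists_eq_span_singleton_h_self_eq hD1 (t := -1) (by simpa using hDneg)
    have he₀e : h e₀ e = 0 :=
      mem_perp_span_singleton.mp (le_perp_comm.mp hDle (mem_span_singleton_self e₀))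
    have hpair : ℂ ∙ e ⊔ ℂ ∙ e₀ = span ℂ {e₀, e} := by rw [sup_comm, span_insert]
    refine ⟨⟨hD1, hDneg⟩, ⟨hsup _ hD1 hDneg, ?_⟩, le_sup_left, ?_⟩
    · simpa [hpair] using isSig11_span_pair (by simpa using he₀) (by simpa using he) he₀e
    · simpa [hpair] using perp_span_singleton_inf_span_pair (by simp [he]) he₀e
  · rintro ⟨D, P⟩ ⟨⟨hD1, hDneg⟩, ⟨hP2, -⟩, hDP, hperp⟩
    refine ⟨D, ⟨hD1, le_perp_comm.mpr (hperp ▸ inf_le_left)⟩, ?_⟩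
    have hsupP : D ⊔ ℂ ∙ e₀ = P :=
      eq_of_le_of_finrank_eq (sup_le hDP (hperp ▸ inf_le_right)) (by rw [hP2, hsup D hD1 hDneg])
    simp [hsupP]
end

section
/- Define λ : ℂ⁴ → (ℂ⁴ →L[ℂ] ℂ) by λ(σ,u,v,z)(Y) = Y_σ + (1/(2i))(v·Y_u − u·Y_v) + z·Y_u, and the vector field X_H : ℂ⁴ → ℂ⁴ by X_H(σ,u,v,z) = (u/(2i), 0, 1, i). Then for every p = (σ,u,v,z) ∈ ℂ⁴: (a) λ(p)(X_H(p)) = 0, and (b) for all Y ∈ ℂ⁴, (fderiv λ p (X_H(p)))(Y) − (fderiv λ p Y)(X_H(p)) = 0. (Equations (10) and (19): X_H is the horizontal lift of the (0,1)-vector ∂_v + (u/2i)∂_σ, characterized by i_{X_H} dλ = 0.) -/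
open Complex

/-- The horizontal vector field `X_H(σ,u,v,z) = (u/(2i), 0, 1, i)` on ℂ⁴,
with coordinates `(σ,u,v,z) = (p 0, p 1, p 2, p 3)`. -/
noncomputable def XH (p : Fin 4 → ℂ) : Fin 4 → ℂ :=
  ![p 1 / (2 * I), 0, 1, I]

/-!
The Liouville form is affine in the base point, `λ p = dσ + B p` with `B` linear, so its derivative
is the constant `B` and `i_X dλ (Y) = B X Y - B Y X`. For `X = X_H` the `dσ`-part of `λ(X_H)`
cancels the `-(u/2i)`-term, and in the antisymmetrisation only the `Y_u`-terms survive, with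
coefficient `1/i + i = 0`.
-/

theorem fderiv_eq_of_forall_eq_const_add {𝕜 E F : Type*} [NontriviallyNormedField 𝕜]
    [NormedAddCommGroup E] [NormedSpace 𝕜 E] [NormedAddCommGroup F] [NormedSpace 𝕜 F]
    {f : E → F} (c : F) (B : E →L[𝕜] F) (hf : ∀ p, f p = c + B p) (p : E) :
    fderiv 𝕜 f p = B := by
  rw [funext hf, fderiv_const_add, B.fderiv]

/-- The part `(1/(2i))(v dY_u − u dY_v) + z dY_u` of the Liouville form, linear in `(σ,u,v,z)`. -/
noncomputable def liouvilleLinearPart : (Fin 4 → ℂ) →L[ℂ] (Fin 4 → ℂ) →L[ℂ] ℂ :=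
  let e : Fin 4 → (Fin 4 → ℂ) →L[ℂ] ℂ := ContinuousLinearMap.proj
  (1 / (2 * I)) • ((e 2).smulRight (e 1) - (e 1).smulRight (e 2)) + (e 3).smulRight (e 1)

theorem liouvilleLinearPart_apply (p Y : Fin 4 → ℂ) :
    liouvilleLinearPart p Y = (1 / (2 * I)) * (p 2 * Y 1 - p 1 * Y 2) + p 3 * Y 1 := by
  simp [liouvilleLinearPart]

theorem liouvilleLinearPart_XH_sub_swap (p Y : Fin 4 → ℂ) :
    liouvilleLinearPart (XH p) Y - liouvilleLinearPart Y (XH p) = 0 := by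
  simp [liouvilleLinearPart_apply, XH]
  ring

/-- for the Liouville form
`λ(σ,u,v,z)(Y) = Y_σ + (1/2i)(v Y_u − u Y_v) + z Y_u` and the vector field
`X_H(σ,u,v,z) = (u/(2i), 0, 1, i)`, one has `λ(X_H) = 0` and `i_{X_H} dλ = 0`
(equations (10) and (19)). -/
theorem horizontal_lift_annihilates_liouville
    (lam : (Fin 4 → ℂ) → ((Fin 4 → ℂ) →L[ℂ] ℂ))
    (hlam : ∀ p Y, lam p Y
      = Y 0 + (1 / (2 * I)) * (p 2 * Y 1 - p 1 * Y 2) + p 3 * Y 1) :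
    ∀ p : Fin 4 → ℂ,
      lam p (XH p) = 0 ∧
      ∀ Y : Fin 4 → ℂ,
        (fderiv ℂ lam p (XH p)) Y - (fderiv ℂ lam p Y) (XH p) = 0 := by
  have hlam_affine : ∀ p, lam p = ContinuousLinearMap.proj 0 + liouvilleLinearPart p := by
    intro p
    ext Y
    simp [hlam, liouvilleLinearPart_apply, add_assoc]
  intro p
  refine ⟨?_, fun Y => ?_⟩
  · rw [hlam]
    simp only [XH, Matrix.cons_val]
    ring
  · rw [fderiv_eq_of_forall_eq_const_add _ _ hlam_affine]
    exact liouvilleLinearPart_XH_sub_swap p Y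
end
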